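/- arXiv:math/0112290 — 4 statements merged into one kernel-verified Lean document; each statement's English description precedes it below -/
import Mathlib

section
/- If V is a set of 2n points in the closed unit ball of ℝⁿ (n ≥ 2) with all pairwise distances ≥ √2, then V = {±e₁,...,±eₙ} for some orthonormal basis e₁,...,eₙ of ℝⁿ. -/
/-!
Since `‖u‖, ‖v‖ ≤ 1`, the bound `‖u - v‖² ≥ 2` reads `2⟪u, v⟫ ≤ ‖u‖² + ‖v‖² - 2 ≤ 0`, so `V` is a
set of nonzero, pairwise non-acute vectors. Such a set has at most `2n` elements: projecting it
onto the hyperplane orthogonal to one of its vectors `u` keeps it non-acute and injective, except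
on at most one negative multiple of `u`, which is sent to `0`. So when `#V = 2n` every `u ∈ V` has
a negative multiple `c • u ∈ V`, and every other `x ∈ V`, being non-acute to both, is orthogonal
to `u`. As `n ≥ 2` such an `x` exists, and `0 = 2⟪u, x⟫ ≤ ‖u‖² + ‖x‖² - 2` makes `u` a unit vector;
hence `c = -1`, and one vector out of each pair `±u` gives the orthonormal basis.
-/

open Module
open scoped RealInnerProductSpace

section Projection

variable {E : Type*} [NormedAddCommGroup E] [InnerProductSpace ℝ E]

theorem starProjection_orthogonal_singleton_apply (u w : E) :
    (ℝ ∙ u)ᗮ.starProjection w = w - (⟪u, w⟫ / ‖u‖ ^ 2) • u := by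
  rw [Submodule.starProjection_orthogonal, sub_apply,
    Submodule.starProjection_singleton]
  simp

theorem inner_starProjection_orthogonal_singleton (u w w' : E) :
    ⟪(ℝ ∙ u)ᗮ.starProjection w, (ℝ ∙ u)ᗮ.starProjection w'⟫ =
      ⟪w, w'⟫ - ⟪u, w⟫ * ⟪u, w'⟫ / ‖u‖ ^ 2 := by
  simp only [starProjection_orthogonal_singleton_apply, inner_sub_left, inner_sub_right,
    real_inner_smul_left, real_inner_smul_right, real_inner_self_eq_norm_sq, real_inner_comm w u]
  rcases eq_or_ne u 0 with rfl | hu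
  · simp
  field_simp
  ring

theorem inner_starProjection_orthogonal_singleton_le {u w w' : E} (hw : ⟪u, w⟫ ≤ 0)
    (hw' : ⟪u, w'⟫ ≤ 0) :
    ⟪(ℝ ∙ u)ᗮ.starProjection w, (ℝ ∙ u)ᗮ.starProjection w'⟫ ≤ ⟪w, w'⟫ := by
  rw [inner_starProjection_orthogonal_singleton]
  have : 0 ≤ ⟪u, w⟫ * ⟪u, w'⟫ / ‖u‖ ^ 2 :=
    div_nonneg (mul_nonneg_of_nonpos_of_nonpos hw hw') (by positivity)
  linarith

end Projection

section NonacuteSet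

variable {E : Type*} [NormedAddCommGroup E] [InnerProductSpace ℝ E]

theorem exists_neg_smul_eq_of_mem_span_singleton {u w : E} (hw : w ∈ ℝ ∙ u) (hw0 : w ≠ 0)
    (huw : ⟪u, w⟫ ≤ 0) : ∃ c < (0 : ℝ), c • u = w := by
  obtain ⟨c, rfl⟩ := Submodule.mem_span_singleton.mp hw
  refine ⟨c, lt_of_le_of_ne ?_ (left_ne_zero_of_smul hw0), rfl⟩
  rw [real_inner_smul_right, real_inner_self_eq_norm_sq] at huw
  have : 0 < ‖u‖ ^ 2 := by have := right_ne_zero_of_smul hw0; positivity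
  nlinarith

open Classical in
theorem card_filter_mem_span_singleton_le_one {S : Finset E} {u : E} (h0 : 0 ∉ S)
    (hS : (S : Set E).Pairwise fun x y => ⟪x, y⟫ ≤ 0) (hu : u ∈ S) :
    ((S.erase u).filter (· ∈ ℝ ∙ u)).card ≤ 1 := by
  refine Finset.card_le_one.mpr fun a ha b hb => ?_
  by_contra hab
  simp only [Finset.mem_filter, Finset.mem_erase] at ha hb
  have hneg {w : E} (hw : w ≠ u ∧ w ∈ S) (hwu : w ∈ ℝ ∙ u) : ∃ c < (0 : ℝ), c • u = w :=
    exists_neg_smul_eq_of_mem_span_singleton hwu (ne_of_mem_of_not_mem hw.2 h0)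
      (hS hu hw.2 hw.1.symm)
  obtain ⟨c, hc, rfl⟩ := hneg ha.1 ha.2
  obtain ⟨d, hd, rfl⟩ := hneg hb.1 hb.2
  have hab' : ⟪c • u, d • u⟫ ≤ 0 := hS ha.1.2 hb.1.2 hab
  rw [real_inner_smul_left, real_inner_smul_right, real_inner_self_eq_norm_sq] at hab'
  have hu0 : u ≠ 0 := ne_of_mem_of_not_mem hu h0
  have : 0 < c * d * ‖u‖ ^ 2 := mul_pos (mul_pos_of_neg_of_neg hc hd) (by positivity)
  linarith

open Classical in
theorem card_le_card_filter_mem_span_singleton_add {K : Submodule ℝ E} {S : Finset E} {u : E}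
    (hSK : (S : Set E) ⊆ K) (hS : (S : Set E).Pairwise fun x y => ⟪x, y⟫ ≤ 0)
    (hu : u ∈ S) {m : ℕ}
    (hm : ∀ T : Finset E, (T : Set E) ⊆ (ℝ ∙ u)ᗮ ⊓ K → 0 ∉ T →
      (T : Set E).Pairwise (fun x y => ⟪x, y⟫ ≤ 0) → T.card ≤ m) :
    S.card ≤ ((S.erase u).filter (· ∈ ℝ ∙ u)).card + m + 1 := by
  set P := (ℝ ∙ u)ᗮ.starProjection
  set N := (S.erase u).filter (· ∉ ℝ ∙ u)
  have hmemN {w : E} (hw : w ∈ N) : w ∈ S ∧ ⟪u, w⟫ ≤ 0 ∧ P w ≠ 0 := by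
    simp only [N, Finset.mem_filter, Finset.mem_erase] at hw
    refine ⟨hw.1.2, hS hu hw.1.2 hw.1.1.symm, ?_⟩
    rw [Ne, Submodule.starProjection_apply_eq_zero_iff, Submodule.orthogonal_orthogonal]
    exact hw.2
  have hinj : Set.InjOn P N := by
    intro w hw w' hw' hPw
    by_contra hne
    obtain ⟨hwS, huw, hPw0⟩ := hmemN hw
    obtain ⟨hw'S, huw', -⟩ := hmemN hw'
    have hle := inner_starProjection_orthogonal_singleton_le huw huw'
    rw [← hPw, real_inner_self_eq_norm_sq] at hle
    have : 0 < ‖P w‖ ^ 2 := by positivity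
    linarith [hS hwS hw'S hne]
  have hT : (N.image P).card ≤ m := by
    refine hm _ ?_ ?_ ?_ <;> simp only [Finset.coe_image, Finset.mem_image]
    · rintro _ ⟨w, hw, rfl⟩
      refine ⟨Submodule.starProjection_apply_mem _ w, ?_⟩
      rw [SetLike.mem_coe, starProjection_orthogonal_singleton_apply]
      exact K.sub_mem (hSK (hmemN hw).1) (K.smul_mem _ (hSK hu))
    · rintro ⟨w, hw, hPw⟩
      exact (hmemN hw).2.2 hPw
    · rintro _ ⟨w, hw, rfl⟩ _ ⟨w', hw', rfl⟩ hne
      obtain ⟨hwS, huw, -⟩ := hmemN hw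
      obtain ⟨hw'S, huw', -⟩ := hmemN hw'
      exact (inner_starProjection_orthogonal_singleton_le huw huw').trans
        (hS hwS hw'S fun h => hne (congrArg P h))
  rw [Finset.card_image_of_injOn hinj] at hT
  have : ((S.erase u).filter (· ∈ ℝ ∙ u)).card + N.card = (S.erase u).card :=
    Finset.card_filter_add_card_filter_not _
  have := Finset.card_erase_add_one hu
  omega

theorem inner_eq_zero_of_neg_smul_mem {S : Finset E}
    (hS : (S : Set E).Pairwise fun x y => ⟪x, y⟫ ≤ 0) {u x : E} {c : ℝ} (hc : c < 0)
    (hu : u ∈ S) (hcu : c • u ∈ S) (hx : x ∈ S) (hxu : x ≠ u) (hxcu : x ≠ c • u) :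
    ⟪u, x⟫ = 0 := by
  have h₁ : ⟪u, x⟫ ≤ 0 := hS hu hx hxu.symm
  have h₂ : ⟪c • u, x⟫ ≤ 0 := hS hcu hx hxcu.symm
  rw [real_inner_smul_left] at h₂
  nlinarith

variable [FiniteDimensional ℝ E]

theorem card_le_two_mul_finrank_of_subset {K : Submodule ℝ E} {S : Finset E}
    (hSK : (S : Set E) ⊆ K) (h0 : 0 ∉ S) (hS : (S : Set E).Pairwise fun x y => ⟪x, y⟫ ≤ 0) :
    S.card ≤ 2 * finrank ℝ K := by
  induction hK : finrank ℝ K generalizing K S with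
  | zero =>
    rw [Submodule.finrank_eq_zero] at hK
    subst hK
    refine Finset.card_eq_zero.mpr (Finset.eq_empty_of_forall_notMem fun v hv => ?_) |>.le
    obtain rfl : v = 0 := hSK hv
    exact h0 hv
  | succ n ih =>
    rcases S.eq_empty_or_nonempty with rfl | ⟨u, hu⟩
    · simp
    have hu0 : u ≠ 0 := ne_of_mem_of_not_mem hu h0
    have hrank : finrank ℝ ((ℝ ∙ u)ᗮ ⊓ K : Submodule ℝ E) = n := by
      have := Submodule.finrank_add_inf_finrank_orthogonal
        ((Submodule.span_singleton_le_iff_mem u K).mpr (hSK hu))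
      rw [finrank_span_singleton hu0] at this
      omega
    have := card_le_card_filter_mem_span_singleton_add hSK hS hu
      fun T hT hT0 hTS => ih hT hT0 hTS hrank
    have := card_filter_mem_span_singleton_le_one h0 hS hu
    omega

theorem exists_neg_smul_mem_of_card_eq {S : Finset E} (h0 : 0 ∉ S)
    (hS : (S : Set E).Pairwise fun x y => ⟪x, y⟫ ≤ 0) (hcard : S.card = 2 * finrank ℝ E)
    {u : E} (hu : u ∈ S) : ∃ c < (0 : ℝ), c • u ∈ S := by
  classical
  by_contra! hno
  have hZ : ((S.erase u).filter (· ∈ ℝ ∙ u)).card = 0 := by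
    refine Finset.card_eq_zero.mpr (Finset.filter_eq_empty_iff.mpr fun w hw hwu => ?_)
    obtain ⟨hwu', hwS⟩ := Finset.mem_erase.mp hw
    obtain ⟨c, hc, rfl⟩ := exists_neg_smul_eq_of_mem_span_singleton hwu
      (ne_of_mem_of_not_mem hwS h0) (hS hu hwS hwu'.symm)
    exact hno c hc hwS
  have hu0 : u ≠ 0 := ne_of_mem_of_not_mem hu h0
  have hrank : finrank ℝ ((ℝ ∙ u)ᗮ ⊓ ⊤ : Submodule ℝ E) + 1 = finrank ℝ E := by
    rw [inf_top_eq, ← finrank_span_singleton (K := ℝ) hu0, add_comm,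
      Submodule.finrank_add_finrank_orthogonal]
  have := card_le_card_filter_mem_span_singleton_add (K := ⊤) (by simp) hS hu
    fun T hT hT0 hTS => card_le_two_mul_finrank_of_subset (K := (ℝ ∙ u)ᗮ ⊓ ⊤) hT hT0 hTS
  omega

end NonacuteSet

section UnitBall

variable {E : Type*} [NormedAddCommGroup E] [InnerProductSpace ℝ E]

theorem two_mul_inner_le_of_sqrt_two_le_dist {u v : E} (h : √2 ≤ dist u v) :
    2 * ⟪u, v⟫ ≤ ‖u‖ ^ 2 + ‖v‖ ^ 2 - 2 := by
  have h2 : 2 ≤ ‖u - v‖ ^ 2 := by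
    rw [← dist_eq_norm, ← Real.sq_sqrt zero_le_two]
    gcongr
  rw [norm_sub_sq_real] at h2
  linarith

theorem pairwise_inner_nonpos_of_sqrt_two_le_dist {V : Finset E} (hball : ∀ v ∈ V, ‖v‖ ≤ 1)
    (hdist : ∀ u ∈ V, ∀ v ∈ V, u ≠ v → √2 ≤ dist u v) :
    (V : Set E).Pairwise fun x y => ⟪x, y⟫ ≤ 0 := fun u hu v hv huv => by
  nlinarith [two_mul_inner_le_of_sqrt_two_le_dist (hdist u hu v hv huv), hball u hu, hball v hv,
    norm_nonneg u, norm_nonneg v]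

theorem zero_notMem_of_sqrt_two_le_dist {V : Finset E} (hball : ∀ v ∈ V, ‖v‖ ≤ 1)
    (hdist : ∀ u ∈ V, ∀ v ∈ V, u ≠ v → √2 ≤ dist u v) (hV : 1 < V.card) : 0 ∉ V := by
  intro h0
  obtain ⟨v, hv, hv0⟩ := Finset.exists_mem_ne hV 0
  have h := two_mul_inner_le_of_sqrt_two_le_dist (hdist v hv 0 h0 hv0)
  simp only [inner_zero_right, norm_zero] at h
  nlinarith [norm_nonneg v, hball v hv]

variable [FiniteDimensional ℝ E]

theorem norm_eq_one_of_sqrt_two_le_dist {V : Finset E} (hball : ∀ v ∈ V, ‖v‖ ≤ 1)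
    (hdist : ∀ u ∈ V, ∀ v ∈ V, u ≠ v → √2 ≤ dist u v) (hcard : V.card = 2 * finrank ℝ E)
    (hV : 2 < V.card) {u : E} (hu : u ∈ V) : ‖u‖ = 1 := by
  classical
  have hS := pairwise_inner_nonpos_of_sqrt_two_le_dist hball hdist
  have h0 := zero_notMem_of_sqrt_two_le_dist hball hdist (by omega)
  obtain ⟨c, hc, hcu⟩ := exists_neg_smul_mem_of_card_eq h0 hS hcard hu
  obtain ⟨x, hx, hxuc⟩ := Finset.exists_mem_notMem_of_card_lt_card
    ((Finset.card_le_two (a := u) (b := c • u)).trans_lt hV)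
  simp only [Finset.mem_insert, Finset.mem_singleton, not_or] at hxuc
  have hux := two_mul_inner_le_of_sqrt_two_le_dist (hdist u hu x hx (Ne.symm hxuc.1))
  rw [inner_eq_zero_of_neg_smul_mem hS hc hu hcu hx hxuc.1 hxuc.2] at hux
  refine le_antisymm (hball u hu) ?_
  nlinarith [hball x hx, norm_nonneg u, norm_nonneg x]

theorem neg_mem_of_sqrt_two_le_dist {V : Finset E} (hball : ∀ v ∈ V, ‖v‖ ≤ 1)
    (hdist : ∀ u ∈ V, ∀ v ∈ V, u ≠ v → √2 ≤ dist u v) (hcard : V.card = 2 * finrank ℝ E)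
    (hV : 2 < V.card) {u : E} (hu : u ∈ V) : -u ∈ V := by
  have hS := pairwise_inner_nonpos_of_sqrt_two_le_dist hball hdist
  have h0 := zero_notMem_of_sqrt_two_le_dist hball hdist (by omega)
  obtain ⟨c, hc, hcu⟩ := exists_neg_smul_mem_of_card_eq h0 hS hcard hu
  have hnorm := norm_eq_one_of_sqrt_two_le_dist hball hdist hcard hV hcu
  rw [norm_smul, norm_eq_one_of_sqrt_two_le_dist hball hdist hcard hV hu, mul_one,
    Real.norm_of_nonpos hc.le] at hnorm
  obtain rfl : c = -1 := by linarith
  rwa [neg_one_smul] at hcu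

theorem inner_eq_zero_of_sqrt_two_le_dist {V : Finset E} (hball : ∀ v ∈ V, ‖v‖ ≤ 1)
    (hdist : ∀ u ∈ V, ∀ v ∈ V, u ≠ v → √2 ≤ dist u v) (hcard : V.card = 2 * finrank ℝ E)
    (hV : 2 < V.card) {u x : E} (hu : u ∈ V) (hx : x ∈ V) (hxu : x ≠ u) (hxu' : x ≠ -u) :
    ⟪u, x⟫ = 0 := by
  refine inner_eq_zero_of_neg_smul_mem (pairwise_inner_nonpos_of_sqrt_two_le_dist hball hdist)
    neg_one_lt_zero hu ?_ hx hxu ?_ <;> rw [neg_one_smul]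
  exacts [neg_mem_of_sqrt_two_le_dist hball hdist hcard hV hu, hxu']

end UnitBall

theorem Finset.exists_neg_transversal {α : Type*} [InvolutiveNeg α] [DecidableEq α]
    (V : Finset α) (hneg : ∀ v ∈ V, -v ∈ V) (hfix : ∀ v ∈ V, -v ≠ v) :
    ∃ s ⊆ V, (∀ v ∈ s, -v ∉ s) ∧ (∀ v, v ∈ V ↔ v ∈ s ∨ -v ∈ s) ∧ V.card = 2 * s.card := by
  obtain ⟨s, hs, hmax⟩ := (V.powerset.filter fun s => ∀ v ∈ s, -v ∉ s).exists_max_image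
    Finset.card ⟨∅, by simp⟩
  simp only [Finset.mem_filter, Finset.mem_powerset] at hs hmax
  obtain ⟨hsV, hfree⟩ := hs
  have hcover (v : α) (hv : v ∈ V) : v ∈ s ∨ -v ∈ s := by
    by_contra! h
    have hins : ∀ w ∈ insert v s, -w ∉ insert v s := by
      simp only [Finset.mem_insert, not_or, forall_eq_or_imp]
      refine ⟨⟨hfix v hv, h.2⟩, fun w hw => ⟨fun hwv => h.2 ?_, hfree w hw⟩⟩
      rwa [← hwv, neg_neg]
    have := hmax (insert v s) ⟨Finset.insert_subset hv hsV, hins⟩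
    rw [Finset.card_insert_of_notMem h.1] at this
    omega
  have hcompl : V \ s = s.image (-·) := by
    ext x
    simp only [Finset.mem_sdiff, Finset.mem_image]
    constructor
    · rintro ⟨hx, hxs⟩
      exact ⟨-x, (hcover x hx).resolve_left hxs, neg_neg x⟩
    · rintro ⟨y, hy, rfl⟩
      exact ⟨hneg y (hsV hy), hfree y hy⟩
  refine ⟨s, hsV, hfree, fun v => ⟨hcover v, ?_⟩, ?_⟩
  · rintro (hv | hv)
    exacts [hsV hv, neg_neg v ▸ hneg _ (hsV hv)]
  rw [← Finset.card_sdiff_add_card_eq_card hsV, hcompl,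
    Finset.card_image_of_injective _ neg_injective]
  ring

theorem Orthonormal.exists_orthonormalBasis_fin_range_eq {𝕜 E : Type*} [RCLike 𝕜]
    [NormedAddCommGroup E] [InnerProductSpace 𝕜 E] [FiniteDimensional 𝕜 E] {s : Finset E}
    (hs : Orthonormal 𝕜 (Subtype.val : s → E)) {n : ℕ} (hcard : s.card = n)
    (hn : finrank 𝕜 E = n) : ∃ b : OrthonormalBasis (Fin n) 𝕜 E, Set.range b = s := by
  obtain ⟨u, b, hsu, hb⟩ := hs.exists_orthonormalBasis_extension
  obtain rfl : u = s := (Finset.eq_of_subset_of_card_le hsu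
    (by rw [hcard, ← hn, finrank_eq_card_finset_basis b.toBasis])).symm
  refine ⟨b.reindex (u.equivFinOfCardEq hcard), ?_⟩
  rw [OrthonormalBasis.coe_reindex, EquivLike.range_comp, hb, Subtype.range_coe]

theorem exists_orthonormalBasis_eq_range_union_range_neg {E : Type*} [NormedAddCommGroup E]
    [InnerProductSpace ℝ E] [FiniteDimensional ℝ E] {n : ℕ} (hn : finrank ℝ E = n)
    {V : Finset E} (hcard : V.card = 2 * n) (hunit : ∀ u ∈ V, ‖u‖ = 1)
    (hneg : ∀ u ∈ V, -u ∈ V) (horth : ∀ u ∈ V, ∀ x ∈ V, x ≠ u → x ≠ -u → ⟪u, x⟫ = 0) :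
    ∃ b : OrthonormalBasis (Fin n) ℝ E,
      (V : Set E) = Set.range (fun i => b i) ∪ Set.range (fun i => -b i) := by
  classical
  obtain ⟨s, hsV, hfree, hmem, hcard_s⟩ := V.exists_neg_transversal hneg fun v hv h => by
    have := congrArg (⟪v, ·⟫) h
    norm_num [real_inner_self_eq_norm_sq, hunit v hv] at this
  have hs : Orthonormal ℝ (Subtype.val : s → E) := by
    refine orthonormal_subtype_iff_ite.mpr fun u hu x hx => ?_
    split_ifs with hux
    · rw [← hux, real_inner_self_eq_norm_sq, hunit u (hsV hu), one_pow]
    · refine horth u (hsV hu) x (hsV hx) (Ne.symm hux) ?_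
      rintro rfl
      exact hfree u hu hx
  obtain ⟨b, hb⟩ := hs.exists_orthonormalBasis_fin_range_eq (by omega) hn
  refine ⟨b, Set.ext fun x => ?_⟩
  have hrange (y : E) : (∃ i, b i = y) ↔ y ∈ s := by
    rw [← Finset.mem_coe, ← hb, Set.mem_range]
  simp only [Set.mem_union, Set.mem_range, Finset.mem_coe, neg_eq_iff_eq_neg, hrange, hmem]

theorem cross_polytope_of_pairwise_sqrt_two (n : ℕ) (hn : 2 ≤ n)
    (V : Finset (EuclideanSpace ℝ (Fin n)))
    (hcard : V.card = 2 * n)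
    (hball : ∀ v ∈ V, ‖v‖ ≤ 1)
    (hdist : ∀ u ∈ V, ∀ v ∈ V, u ≠ v → Real.sqrt 2 ≤ dist u v) :
    ∃ b : OrthonormalBasis (Fin n) ℝ (EuclideanSpace ℝ (Fin n)),
      (V : Set (EuclideanSpace ℝ (Fin n))) =
        Set.range (fun i => b i) ∪ Set.range (fun i => -b i) := by
  have hrank : finrank ℝ (EuclideanSpace ℝ (Fin n)) = n := finrank_euclideanSpace_fin
  have hcard' : V.card = 2 * finrank ℝ (EuclideanSpace ℝ (Fin n)) := by rw [hrank, hcard]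
  have hV : 2 < V.card := by omega
  exact exists_orthonormalBasis_eq_range_union_range_neg hrank hcard
    (fun _ => norm_eq_one_of_sqrt_two_le_dist hball hdist hcard' hV)
    (fun _ => neg_mem_of_sqrt_two_le_dist hball hdist hcard' hV)
    (fun _ hu _ hx => inner_eq_zero_of_sqrt_two_le_dist hball hdist hcard' hV hu hx)
end

section
/- Every compact subset A of ℝⁿ with at least two points contains a finite subset with the same circumradius as A. -/
/-!
By Helly's theorem, a compact set `A ⊆ ℝⁿ` that lies in no closed ball of radius `r` contains
`n + 1` points that already lie in no such ball. The circumradius of an `(n + 1)`-tuple of points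
is a 1-Lipschitz function of the tuple, so it attains its maximum on the compact set `Aⁿ⁺¹`; that
maximum is at least every `r` below the circumradius of `A`, hence equal to it.
-/

/-- The circumradius of a set: the infimum of radii of closed balls containing it. -/
noncomputable def circumradius {n : ℕ} (A : Set (EuclideanSpace ℝ (Fin n))) : ℝ :=
  sInf {r : ℝ | ∃ c : EuclideanSpace ℝ (Fin n), A ⊆ Metric.closedBall c r}

open Metric Set Module

theorem exists_tuple_forall_not_subset_closedBall {E : Type*} [NormedAddCommGroup E]
    [NormedSpace ℝ E] [FiniteDimensional ℝ E] {A : Set E} {r : ℝ}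
    (h : ∀ c, ¬ A ⊆ closedBall c r) :
    ∃ q : Fin (finrank ℝ E + 1) → E, (∀ i, q i ∈ A) ∧ ∀ c, ¬ range q ⊆ closedBall c r := by
  by_contra! hq
  suffices hinter : ∀ I : Finset A, I.card ≤ finrank ℝ E + 1 →
      (⋂ x ∈ I, closedBall (x : E) r).Nonempty by
    obtain ⟨c, hc⟩ := Convex.helly_theorem_compact' (𝕜 := ℝ)
      (F := fun x : A => closedBall (x : E) r) (fun _ => convex_closedBall _ _)
      (fun _ => isCompact_closedBall _ _) hinter
    refine h c fun x hx => ?_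
    simpa [dist_comm] using mem_iInter.1 hc ⟨x, hx⟩
  intro I hI
  rcases I.eq_empty_or_nonempty with rfl | ⟨x₀, hx₀⟩
  · simp
  have : Nonempty I := ⟨⟨x₀, hx₀⟩⟩
  obtain ⟨e⟩ : Nonempty (I ↪ Fin (finrank ℝ E + 1)) :=
    Function.Embedding.nonempty_of_card_le (by simpa using hI)
  obtain ⟨c, hc⟩ := hq (fun j => (Function.invFun e j).1) fun j => (Function.invFun e j).1.2
  refine ⟨c, mem_iInter₂.2 fun x hx => ?_⟩
  have hx' : (x : E) ∈ closedBall c r :=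
    hc ⟨e ⟨x, hx⟩, by simp only [Function.leftInverse_invFun e.injective _]⟩
  simpa [dist_comm] using hx'

section Circumradius

variable {n : ℕ} {A B : Set (EuclideanSpace ℝ (Fin n))} {c : EuclideanSpace ℝ (Fin n)} {r : ℝ}

theorem bddBelow_radii (hA : A.Nonempty) :
    BddBelow {r : ℝ | ∃ c : EuclideanSpace ℝ (Fin n), A ⊆ closedBall c r} := by
  obtain ⟨a, ha⟩ := hA
  exact ⟨0, fun r ⟨c, hc⟩ => dist_nonneg.trans (hc ha)⟩

theorem nonempty_radii (hA : Bornology.IsBounded A) :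
    {r : ℝ | ∃ c : EuclideanSpace ℝ (Fin n), A ⊆ closedBall c r}.Nonempty := by
  obtain ⟨r, hr⟩ := hA.subset_closedBall 0
  exact ⟨r, 0, hr⟩

theorem circumradius_le_of_subset_closedBall (hA : A.Nonempty) (h : A ⊆ closedBall c r) :
    circumradius A ≤ r :=
  csInf_le (bddBelow_radii hA) ⟨c, h⟩

theorem le_circumradius_of_forall_not_subset_closedBall (hA : Bornology.IsBounded A)
    (h : ∀ c, ¬ A ⊆ closedBall c r) : r ≤ circumradius A := by
  refine le_csInf (nonempty_radii hA) fun s ⟨c, hc⟩ => ?_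
  by_contra! hs
  exact h c (hc.trans (closedBall_subset_closedBall hs.le))

theorem circumradius_le_add {d : ℝ} (hB : B.Nonempty) (hA : Bornology.IsBounded A)
    (h : ∀ y ∈ B, ∃ x ∈ A, dist y x ≤ d) : circumradius B ≤ circumradius A + d := by
  rw [← sub_le_iff_le_add]
  refine le_csInf (nonempty_radii hA) fun s ⟨c, hc⟩ => sub_le_iff_le_add.2 ?_
  refine circumradius_le_of_subset_closedBall (c := c) hB fun y hy => ?_
  obtain ⟨x, hx, hyx⟩ := h y hy
  rw [mem_closedBall]
  calc dist y c ≤ dist y x + dist x c := dist_triangle y x c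
    _ ≤ s + d := by linarith [mem_closedBall.1 (hc hx)]

theorem circumradius_mono (hB : B.Nonempty) (hA : Bornology.IsBounded A) (hBA : B ⊆ A) :
    circumradius B ≤ circumradius A := by
  simpa using circumradius_le_add hB hA fun y hy => ⟨y, hBA hy, (dist_self y).le⟩

theorem lipschitzWith_circumradius_range {ι : Type*} [Fintype ι] [Nonempty ι] :
    LipschitzWith 1 fun p : ι → EuclideanSpace ℝ (Fin n) => circumradius (range p) :=
  LipschitzWith.of_le_add fun p q =>
    circumradius_le_add (range_nonempty p) (finite_range q).isBounded
      (forall_mem_range.2 fun i => ⟨q i, mem_range_self i, dist_le_pi_dist p q i⟩)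

end Circumradius

theorem exists_finite_subset_same_circumradius_general (n : ℕ)
    (A : Set (EuclideanSpace ℝ (Fin n))) (hA : IsCompact A) :
    ∃ F : Finset (EuclideanSpace ℝ (Fin n)),
      (F : Set (EuclideanSpace ℝ (Fin n))) ⊆ A ∧
      circumradius (F : Set (EuclideanSpace ℝ (Fin n))) = circumradius A := by
  rcases A.eq_empty_or_nonempty with rfl | hAne
  · exact ⟨∅, by simp⟩
  let m := finrank ℝ (EuclideanSpace ℝ (Fin n)) + 1
  obtain ⟨p, hpA, hmax⟩ := (isCompact_univ_pi fun _ : Fin m => hA).exists_isMaxOn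
    (univ_pi_nonempty_iff.2 fun _ => hAne) lipschitzWith_circumradius_range.continuous.continuousOn
  replace hpA : range p ⊆ A := range_subset_iff.2 fun i => hpA i (mem_univ i)
  refine ⟨Finset.univ.image p, by simpa using hpA, ?_⟩
  rw [Finset.coe_image, Finset.coe_univ, image_univ]
  refine le_antisymm (circumradius_mono (range_nonempty p) hA.isBounded hpA)
    (le_of_forall_lt_imp_le_of_dense fun r hr => ?_)
  obtain ⟨q, hqA, hq⟩ := exists_tuple_forall_not_subset_closedBall
    fun c hc => (circumradius_le_of_subset_closedBall hAne hc).not_gt hr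
  exact (le_circumradius_of_forall_not_subset_closedBall (finite_range q).isBounded hq).trans
    (hmax fun i _ => hqA i)

theorem exists_finite_subset_same_circumradius (n : ℕ)
    (A : Set (EuclideanSpace ℝ (Fin n))) (hA : IsCompact A)
    (h2 : ∃ a ∈ A, ∃ b ∈ A, a ≠ b) :
    ∃ F : Finset (EuclideanSpace ℝ (Fin n)),
      (F : Set (EuclideanSpace ℝ (Fin n))) ⊆ A ∧
      circumradius (F : Set (EuclideanSpace ℝ (Fin n))) = circumradius A :=
  exists_finite_subset_same_circumradius_general n A hA
end

section
/- If V ⊆ Bⁿ (n ≥ 3) is a set of 2n points with all pairwise distances ≥ √2, and V₀ ⊆ V is a minimal subset with circumradius 1, then V₀ consists of two antipodal points {x, −x} with ‖x‖ = 1, and the remaining 2n−2 points of V lie on the great (n−2)-sphere {y : ‖y‖ = 1, ⟨x,y⟩ = 0}. -/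
open RealInnerProductSpace Module Submodule Finset

section InnerProductSpace

variable {E : Type*} [NormedAddCommGroup E] [InnerProductSpace ℝ E]

noncomputable def vectorRejection (v w : E) : E := w - (⟪v, w⟫ / ‖v‖ ^ 2) • v

theorem inner_vectorRejection_right (v w : E) : ⟪v, vectorRejection v w⟫ = 0 := by
  rcases eq_or_ne v 0 with rfl | hv
  · exact inner_zero_left _
  have : ‖v‖ ^ 2 ≠ 0 := by positivity
  simp only [vectorRejection, inner_sub_right, real_inner_smul_right, real_inner_self_eq_norm_sq]
  field_simp
  ring

theorem inner_vectorRejection_vectorRejection (v w w' : E) :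
    ⟪vectorRejection v w, vectorRejection v w'⟫ = ⟪w, w'⟫ - ⟪v, w⟫ * ⟪v, w'⟫ / ‖v‖ ^ 2 := by
  rcases eq_or_ne v 0 with rfl | hv
  · simp [vectorRejection]
  have : ‖v‖ ^ 2 ≠ 0 := by positivity
  simp only [vectorRejection, inner_sub_left, inner_sub_right, real_inner_smul_left,
    real_inner_smul_right, real_inner_self_eq_norm_sq, real_inner_comm w v]
  field_simp
  ring

theorem inner_vectorRejection_le {v w w' : E} (hw : ⟪v, w⟫ ≤ 0) (hw' : ⟪v, w'⟫ ≤ 0) :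
    ⟪vectorRejection v w, vectorRejection v w'⟫ ≤ ⟪w, w'⟫ := by
  rw [inner_vectorRejection_vectorRejection, sub_le_self_iff]
  exact div_nonneg (mul_nonneg_of_nonpos_of_nonpos hw hw') (sq_nonneg _)

theorem span_image_vectorRejection_lt {v : E} (hv : v ≠ 0) {s t : Set E} (hvs : v ∈ s)
    (hts : t ⊆ s) : span ℝ (vectorRejection v '' t) < span ℝ s := by
  have hle : span ℝ (vectorRejection v '' t) ≤ span ℝ s := by
    rw [span_le, Set.image_subset_iff]
    exact fun w hw ↦ sub_mem (subset_span (hts hw)) (smul_mem _ _ (subset_span hvs))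
  have horth : span ℝ (vectorRejection v '' t) ≤ (ℝ ∙ v)ᗮ := by
    rw [span_le, Set.image_subset_iff]
    exact fun w _ ↦ mem_orthogonal_singleton_iff_inner_right.mpr (inner_vectorRejection_right v w)
  refine lt_of_le_of_ne hle fun h ↦ hv ?_
  have : v ∈ (ℝ ∙ v)ᗮ := horth (h ▸ subset_span hvs)
  exact inner_self_eq_zero.mp (mem_orthogonal_singleton_iff_inner_right.mp this)

structure IsNonacute (s : Set E) : Prop where
  zero_notMem : 0 ∉ s
  pairwise_inner_nonpos : s.Pairwise fun u w ↦ ⟪u, w⟫ ≤ 0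

namespace IsNonacute

variable {s t : Set E} {v : E}

theorem mono (hs : IsNonacute s) (hts : t ⊆ s) : IsNonacute t :=
  ⟨fun h ↦ hs.zero_notMem (hts h), hs.pairwise_inner_nonpos.mono hts⟩

theorem ne_zero_of_mem (hs : IsNonacute s) (hv : v ∈ s) : v ≠ 0 :=
  fun h ↦ hs.zero_notMem (h ▸ hv)

theorem inner_vectorRejection_nonpos (hs : IsNonacute s) (hvs : ∀ w ∈ s, ⟪v, w⟫ ≤ 0) {w w' : E}
    (hw : w ∈ s) (hw' : w' ∈ s) (hne : w ≠ w') :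
    ⟪vectorRejection v w, vectorRejection v w'⟫ ≤ 0 :=
  (inner_vectorRejection_le (hvs w hw) (hvs w' hw')).trans (hs.pairwise_inner_nonpos hw hw' hne)

theorem injOn_vectorRejection (hs : IsNonacute s) (hvs : ∀ w ∈ s, ⟪v, w⟫ ≤ 0) :
    Set.InjOn (vectorRejection v) {w ∈ s | vectorRejection v w ≠ 0} := by
  refine fun w hw w' hw' heq ↦ by_contra fun hne ↦ hw.2 ?_
  have := hs.inner_vectorRejection_nonpos hvs hw.1 hw'.1 hne
  rw [← heq, real_inner_self_eq_norm_sq] at this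
  exact norm_eq_zero.mp (pow_eq_zero_iff two_ne_zero |>.mp (le_antisymm this (sq_nonneg _)))

theorem image_vectorRejection (hs : IsNonacute s) (hvs : ∀ w ∈ s, ⟪v, w⟫ ≤ 0) :
    IsNonacute (vectorRejection v '' {w ∈ s | vectorRejection v w ≠ 0}) := by
  refine ⟨fun ⟨w, hw, h0⟩ ↦ hw.2 h0, ?_⟩
  rintro _ ⟨w, hw, rfl⟩ _ ⟨w', hw', rfl⟩ hne
  exact hs.inner_vectorRejection_nonpos hvs hw.1 hw'.1 fun h ↦ hne (h ▸ rfl)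

theorem exists_neg_smul_of_vectorRejection_eq_zero (hs : IsNonacute s) (hv : v ∈ s) {w : E}
    (hw : w ∈ s) (hwv : w ≠ v) (h : vectorRejection v w = 0) : ∃ t < (0 : ℝ), w = t • v := by
  have hw_eq : w = (⟪v, w⟫ / ‖v‖ ^ 2) • v := sub_eq_zero.mp h
  refine ⟨⟪v, w⟫ / ‖v‖ ^ 2, lt_of_le_of_ne ?_ fun ht ↦ hs.ne_zero_of_mem hw ?_, hw_eq⟩
  · exact div_nonpos_of_nonpos_of_nonneg (hs.pairwise_inner_nonpos hv hw hwv.symm) (sq_nonneg _)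
  · rw [hw_eq, ht, zero_smul]

theorem smul_eq_smul_of_neg (hs : IsNonacute s) {t r : ℝ} (ht : t • v ∈ s) (hr : r • v ∈ s)
    (ht₀ : t < 0) (hr₀ : r < 0) : t • v = r • v := by
  by_contra hne
  have hv : v ≠ 0 := fun h ↦ hs.ne_zero_of_mem ht (by rw [h, smul_zero])
  have hinner : ⟪t • v, r • v⟫ ≤ 0 := hs.pairwise_inner_nonpos ht hr hne
  rw [real_inner_smul_left, real_inner_smul_right, real_inner_self_eq_norm_sq] at hinner
  have : 0 < t * (r * ‖v‖ ^ 2) :=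
    mul_pos_of_neg_of_neg ht₀ (mul_neg_of_neg_of_pos hr₀ (by positivity))
  linarith

theorem exists_rejection {S : Finset E} (hS : IsNonacute (S : Set E)) (hv : v ∈ S) :
    ∃ T : Finset E, IsNonacute (T : Set E) ∧
      finrank ℝ (span ℝ (T : Set E)) < finrank ℝ (span ℝ (S : Set E)) ∧
      #S ≤ #T + 2 ∧ (#S = #T + 2 → ∃ w ∈ S, ∃ t < (0 : ℝ), w = t • v) := by
  classical
  set P := vectorRejection v
  set R := S.erase v
  set N := R.filter (P · = 0)
  set T := (R.filter (¬P · = 0)).image P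
  have hR : IsNonacute (R : Set E) := hS.mono (erase_subset v S)
  have hvR : ∀ w ∈ (R : Set E), ⟪v, w⟫ ≤ 0 := fun w hw ↦
    hS.pairwise_inner_nonpos hv (mem_of_mem_erase hw) (ne_of_mem_erase hw).symm
  have hcoe : (T : Set E) = P '' {w ∈ (R : Set E) | P w ≠ 0} := by
    rw [coe_image, coe_filter]
    rfl
  have hN_neg : ∀ w ∈ N, ∃ t < (0 : ℝ), w = t • v := fun w hw ↦
    hS.exists_neg_smul_of_vectorRejection_eq_zero hv (mem_of_mem_erase (mem_filter.mp hw).1)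
      (ne_of_mem_erase (mem_filter.mp hw).1) (mem_filter.mp hw).2
  have hN : #N ≤ 1 := by
    refine card_le_one.mpr fun w hw w' hw' ↦ ?_
    obtain ⟨t, ht, rfl⟩ := hN_neg w hw
    obtain ⟨r, hr, rfl⟩ := hN_neg w' hw'
    exact hS.smul_eq_smul_of_neg (mem_of_mem_erase (mem_filter.mp hw).1)
      (mem_of_mem_erase (mem_filter.mp hw').1) ht hr
  have hcard : #S = #T + #N + 1 := by
    rw [← card_erase_add_one hv, ← card_filter_add_card_filter_not (s := R) (P · = 0),
      card_image_of_injOn (by rw [coe_filter]; exact hR.injOn_vectorRejection hvR)]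
    ring
  refine ⟨T, hcoe ▸ hR.image_vectorRejection hvR, ?_, by omega, fun h ↦ ?_⟩
  · refine finrank_lt_finrank_of_lt ?_
    rw [hcoe]
    exact span_image_vectorRejection_lt (hS.ne_zero_of_mem hv) hv
      fun w hw ↦ mem_of_mem_erase hw.1
  · obtain ⟨w, hw⟩ := card_pos.mp (show 0 < #N by omega)
    exact ⟨w, mem_of_mem_erase (mem_filter.mp hw).1, hN_neg w hw⟩

theorem card_le_two_mul_finrank {S : Finset E} (hS : IsNonacute (S : Set E)) :
    #S ≤ 2 * finrank ℝ (span ℝ (S : Set E)) := by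
  induction h : finrank ℝ (span ℝ (S : Set E)) using Nat.strong_induction_on generalizing S with
  | _ d ih =>
    obtain rfl | ⟨v, hv⟩ := S.eq_empty_or_nonempty
    · simp
    obtain ⟨T, hT, hlt, hcard, -⟩ := hS.exists_rejection hv
    have := ih _ (h ▸ hlt) hT rfl
    omega

theorem exists_neg_smul_mem_of_card_eq {S : Finset E} (hS : IsNonacute (S : Set E))
    (hcard : #S = 2 * finrank ℝ (span ℝ (S : Set E))) (hv : v ∈ S) :
    ∃ w ∈ S, ∃ t < (0 : ℝ), w = t • v := by
  obtain ⟨T, hT, hlt, hle, hneg⟩ := hS.exists_rejection hv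
  have := hT.card_le_two_mul_finrank
  exact hneg (by omega)

end IsNonacute

variable {u w : E}

theorem two_le_norm_sq_sub_two_mul_inner_add_norm_sq (h : √2 ≤ dist u w) :
    2 ≤ ‖u‖ ^ 2 - 2 * ⟪u, w⟫ + ‖w‖ ^ 2 := by
  rw [← norm_sub_sq_real, ← dist_eq_norm]
  calc (2 : ℝ) = √2 ^ 2 := by norm_num
    _ ≤ dist u w ^ 2 := by gcongr

theorem inner_nonpos_of_sqrt_two_le_dist (hu : ‖u‖ ≤ 1) (hw : ‖w‖ ≤ 1) (h : √2 ≤ dist u w) :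
    ⟪u, w⟫ ≤ 0 := by
  nlinarith [two_le_norm_sq_sub_two_mul_inner_add_norm_sq h, norm_nonneg u, norm_nonneg w]

theorem norm_eq_one_of_sqrt_two_le_dist_of_inner_eq_zero (hu : ‖u‖ ≤ 1) (hw : ‖w‖ ≤ 1)
    (h : √2 ≤ dist u w) (h₀ : ⟪u, w⟫ = 0) : ‖u‖ = 1 := by
  nlinarith [two_le_norm_sq_sub_two_mul_inner_add_norm_sq h, norm_nonneg u, norm_nonneg w]

theorem norm_eq_one_and_inner_eq_zero_of_sqrt_two_le_dist (hw : ‖w‖ ≤ 1) (hu : ‖u‖ = 1)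
    (h₁ : √2 ≤ dist w u) (h₂ : √2 ≤ dist w (-u)) : ‖w‖ = 1 ∧ ⟪u, w⟫ = 0 := by
  have h₁' := inner_nonpos_of_sqrt_two_le_dist hw hu.le h₁
  have h₂' := inner_nonpos_of_sqrt_two_le_dist hw ((norm_neg u).trans_le hu.le) h₂
  rw [inner_neg_right] at h₂'
  have h₀ : ⟪w, u⟫ = 0 := by linarith
  exact ⟨norm_eq_one_of_sqrt_two_le_dist_of_inner_eq_zero hw hu.le h₁ h₀,
    real_inner_comm u w ▸ h₀⟩

theorem norm_eq_one_and_eq_neg_of_dist_eq_two (hu : ‖u‖ ≤ 1) (hw : ‖w‖ ≤ 1)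
    (h : dist u w = 2) : ‖u‖ = 1 ∧ w = -u := by
  rw [dist_eq_norm] at h
  have hu1 : ‖u‖ = 1 := by linarith [norm_sub_le u w]
  have hw1 : ‖w‖ = 1 := by linarith [norm_sub_le u w]
  have hsub := norm_sub_sq_real u w
  rw [h, hu1, hw1] at hsub
  have hadd : ‖u + w‖ ^ 2 = 0 := by
    rw [norm_add_sq_real, hu1, hw1]
    linarith
  have : u + w = 0 := norm_eq_zero.mp (pow_eq_zero_iff two_ne_zero |>.mp hadd)
  exact ⟨hu1, (neg_eq_of_add_eq_zero_right this).symm⟩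

theorem isNonacute_of_sqrt_two_le_dist {s : Set E} (hs : s.Nontrivial)
    (hball : ∀ v ∈ s, ‖v‖ ≤ 1) (hdist : s.Pairwise fun u w ↦ √2 ≤ dist u w) :
    IsNonacute s := by
  refine ⟨fun h0 ↦ ?_, fun u hu w hw hne ↦
    inner_nonpos_of_sqrt_two_le_dist (hball u hu) (hball w hw) (hdist hu hw hne)⟩
  obtain ⟨u, hu, hne⟩ := hs.exists_ne 0
  have : √2 ≤ dist u 0 := hdist hu h0 hne
  rw [dist_zero_right] at this
  linarith [hball u hu, Real.one_lt_sqrt_two]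

theorem exists_antipodal_mem_of_card_eq_two_mul_finrank [FiniteDimensional ℝ E] {S : Finset E}
    (hE : 2 ≤ finrank ℝ E) (hcard : #S = 2 * finrank ℝ E) (hball : ∀ v ∈ S, ‖v‖ ≤ 1)
    (hdist : (S : Set E).Pairwise fun u w ↦ √2 ≤ dist u w) :
    ∃ a ∈ S, ‖a‖ = 1 ∧ -a ∈ S := by
  have hS : IsNonacute (S : Set E) :=
    isNonacute_of_sqrt_two_le_dist (one_lt_card_iff_nontrivial.mp (by omega)) hball hdist
  have hspan := hS.card_le_two_mul_finrank
  have hspanE := Submodule.finrank_le (span ℝ (S : Set E))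
  obtain ⟨a, ha⟩ := card_pos.mp (by omega : 0 < #S)
  obtain ⟨_, hb, t, ht, rfl⟩ := hS.exists_neg_smul_mem_of_card_eq (by omega) ha
  obtain ⟨c, hc, hca⟩ : ∃ c ∈ S, c ∉ ℝ ∙ a := by
    by_contra! h
    have := (finrank_mono (span_le.mpr h)).trans
      (finrank_span_singleton (hS.ne_zero_of_mem ha)).le
    omega
  have hac_ne : c ≠ a := by
    rintro rfl
    exact hca (mem_span_singleton_self c)
  have hbc_ne : c ≠ t • a := by
    rintro rfl
    exact hca (smul_mem _ _ (mem_span_singleton_self a))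
  have hac : ⟪a, c⟫ = 0 := by
    have h₁ := hS.pairwise_inner_nonpos ha hc hac_ne.symm
    have h₂ : ⟪t • a, c⟫ ≤ 0 := hS.pairwise_inner_nonpos hb hc hbc_ne.symm
    rw [real_inner_smul_left] at h₂
    nlinarith
  have ha1 := norm_eq_one_of_sqrt_two_le_dist_of_inner_eq_zero (hball a ha) (hball c hc)
    (hdist ha hc hac_ne.symm) hac
  have hb1 := norm_eq_one_of_sqrt_two_le_dist_of_inner_eq_zero (hball _ hb) (hball c hc)
    (hdist hb hc hbc_ne.symm) (by rw [real_inner_smul_left, hac, mul_zero])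
  rw [norm_smul, ha1, mul_one, Real.norm_of_nonpos ht.le] at hb1
  refine ⟨a, ha, ha1, ?_⟩
  rwa [show t = -1 by linarith, neg_one_smul] at hb

end InnerProductSpace

section Circumradius

variable {n : ℕ}

theorem circumradius_le {A : Set (EuclideanSpace ℝ (Fin n))} (hA : A.Nonempty)
    {c : EuclideanSpace ℝ (Fin n)} {r : ℝ} (h : A ⊆ Metric.closedBall c r) :
    circumradius A ≤ r :=
  csInf_le ⟨0, fun _ ⟨_, hc⟩ ↦ dist_nonneg.trans (hc hA.some_mem)⟩ ⟨c, h⟩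

theorem circumradius_pair (u v : EuclideanSpace ℝ (Fin n)) :
    circumradius {u, v} = dist u v / 2 := by
  have hmid : {u, v} ⊆ Metric.closedBall (midpoint ℝ u v) (dist u v / 2) := by
    rintro x (rfl | rfl) <;> simp [dist_comm, dist_left_midpoint, dist_right_midpoint] <;> linarith
  refine le_antisymm (circumradius_le (Set.insert_nonempty u {v}) hmid) ?_
  refine le_csInf ⟨_, _, hmid⟩ fun r ⟨c, hc⟩ ↦ ?_
  have hu : dist u c ≤ r := hc (Set.mem_insert u {v})
  have hv : dist v c ≤ r := hc (Set.mem_insert_of_mem u rfl)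
  linarith [dist_triangle_right u v c]

theorem nontrivial_of_circumradius_pos {A : Set (EuclideanSpace ℝ (Fin n))}
    (h : 0 < circumradius A) : A.Nontrivial := by
  by_contra hA
  obtain rfl | ⟨u, rfl⟩ := (Set.not_nontrivial_iff.mp hA).eq_empty_or_singleton
  · -- every `r : ℝ` bounds a ball containing `∅`, and `sInf Set.univ = 0` for reals
    simp [circumradius] at h
  · exact h.not_ge (circumradius_le (Set.singleton_nonempty u) (c := u) (by simp))

end Circumradius

theorem minimal_circumradius_subset_antipodal (n : ℕ) (hn : 3 ≤ n)
    (V V₀ : Finset (EuclideanSpace ℝ (Fin n)))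
    (hcard : V.card = 2 * n)
    (hball : ∀ v ∈ V, ‖v‖ ≤ 1)
    (hdist : ∀ u ∈ V, ∀ v ∈ V, u ≠ v → Real.sqrt 2 ≤ dist u v)
    (hsub : V₀ ⊆ V)
    (hr : circumradius (V₀ : Set (EuclideanSpace ℝ (Fin n))) = 1)
    (hmin : ∀ W : Finset (EuclideanSpace ℝ (Fin n)), W ⊆ V →
      circumradius (W : Set (EuclideanSpace ℝ (Fin n))) = 1 → V₀.card ≤ W.card) :
    ∃ x : EuclideanSpace ℝ (Fin n), ‖x‖ = 1 ∧
      (V₀ : Set (EuclideanSpace ℝ (Fin n))) = {x, -x} ∧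
      ∀ v ∈ V, v ∉ V₀ → ‖v‖ = 1 ∧ inner ℝ x v = (0 : ℝ) := by
  obtain ⟨a, ha, ha1, hna⟩ := exists_antipodal_mem_of_card_eq_two_mul_finrank (S := V)
    (by rw [finrank_euclideanSpace_fin]; omega) (by rw [finrank_euclideanSpace_fin, hcard]) hball
    fun u hu w hw ↦ hdist u hu w hw
  have hpair : circumradius ({a, -a} : Set (EuclideanSpace ℝ (Fin n))) = 1 := by
    rw [circumradius_pair, dist_eq_norm, sub_neg_eq_add, ← two_smul ℝ, norm_smul, ha1]
    norm_num
  have hle : #V₀ ≤ 2 :=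
    (hmin {a, -a} (by simp [insert_subset_iff, ha, hna]) (by rwa [coe_pair])).trans card_le_two
  have hlt : 1 < #V₀ :=
    one_lt_card_iff_nontrivial.mpr (nontrivial_of_circumradius_pos (hr ▸ one_pos))
  obtain ⟨u, w, -, rfl⟩ := card_eq_two.mp (show #V₀ = 2 by omega)
  rw [coe_pair, circumradius_pair] at hr
  have huV : u ∈ V := hsub (mem_insert_self u {w})
  have hwV : w ∈ V := hsub (mem_insert_of_mem (mem_singleton_self w))
  obtain ⟨hu1, rfl⟩ :=
    norm_eq_one_and_eq_neg_of_dist_eq_two (hball u huV) (hball _ hwV) (by linarith)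
  refine ⟨u, hu1, coe_pair, fun y hy hyV₀ ↦ ?_⟩
  obtain ⟨hyu, hyw⟩ : y ≠ u ∧ y ≠ -u := by simpa [not_or] using hyV₀
  exact norm_eq_one_and_inner_eq_zero_of_sqrt_two_le_dist (hball y hy) hu1
    (hdist y hy u huV hyu) (hdist y hy _ hwV hyw)
end

section
/- The smallest radius of a spherical container in ℝⁿ (n ≥ 2) that holds k nonoverlapping unit balls is 1 + √2 for every k with n+2 ≤ k ≤ 2n; moreover no ball of radius 1+√2 can contain 2n+1 nonoverlapping unit balls. -/
/-!
If `‖x‖, ‖y‖ ≤ √2`, then `‖x - y‖² = ‖x‖² + ‖y‖² - 2⟪x, y⟫` shows that `2 ≤ dist x y` forces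
`⟪x, y⟫ ≤ 0`, strictly so when the norms are `< √2`. Hence a container of radius `< 1 + √2`
gives `k` vectors with pairwise negative inner products, of which there are at most `n + 1`, and a
container of radius `1 + √2` gives nonzero vectors with pairwise nonpositive inner products, of
which there are at most `2n`. Both bounds go by induction on the dimension: projecting onto the
orthogonal complement of one of the vectors does not increase the inner products of the others,
and in the nonpositive case it kills at most one of them. The `2n` points `±√2 eᵢ` show that the
radius `1 + √2` is attained for every `k ≤ 2n`.
-/

open scoped RealInnerProductSpace
open Module

variable {E : Type*} [NormedAddCommGroup E] [InnerProductSpace ℝ E]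

lemma coe_orthogonalProjectionOnto_orthogonal_span_singleton (v x : E) :
    ((ℝ ∙ v)ᗮ.orthogonalProjectionOnto x : E) = x - (⟪v, x⟫ / ‖v‖ ^ 2) • v := by
  simp [Submodule.starProjection_singleton]

lemma inner_orthogonalProjectionOnto_orthogonal_span_singleton (v x y : E) :
    ⟪(ℝ ∙ v)ᗮ.orthogonalProjectionOnto x, (ℝ ∙ v)ᗮ.orthogonalProjectionOnto y⟫ =
      ⟪x, y⟫ - ⟪v, x⟫ * ⟪v, y⟫ / ‖v‖ ^ 2 := by
  rw [Submodule.coe_inner, coe_orthogonalProjectionOnto_orthogonal_span_singleton,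
    coe_orthogonalProjectionOnto_orthogonal_span_singleton]
  rcases eq_or_ne v 0 with rfl | hv
  · simp
  simp only [inner_sub_left, inner_sub_right, real_inner_smul_left, real_inner_smul_right,
    real_inner_self_eq_norm_sq, real_inner_comm x v]
  field_simp
  ring

lemma inner_orthogonalProjectionOnto_orthogonal_span_singleton_le {v x y : E}
    (hx : ⟪v, x⟫ ≤ 0) (hy : ⟪v, y⟫ ≤ 0) :
    ⟪(ℝ ∙ v)ᗮ.orthogonalProjectionOnto x, (ℝ ∙ v)ᗮ.orthogonalProjectionOnto y⟫ ≤ ⟪x, y⟫ := by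
  rw [inner_orthogonalProjectionOnto_orthogonal_span_singleton]
  have : 0 ≤ ⟪v, x⟫ * ⟪v, y⟫ / ‖v‖ ^ 2 :=
    div_nonneg (mul_nonneg_of_nonpos_of_nonpos hx hy) (by positivity)
  linarith

lemma inner_pos_of_orthogonalProjectionOnto_orthogonal_span_singleton_eq_zero {v x y : E}
    (hx₀ : x ≠ 0) (hy₀ : y ≠ 0) (hvx : ⟪v, x⟫ ≤ 0) (hvy : ⟪v, y⟫ ≤ 0)
    (hx : (ℝ ∙ v)ᗮ.orthogonalProjectionOnto x = 0)
    (hy : (ℝ ∙ v)ᗮ.orthogonalProjectionOnto y = 0) :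
    0 < ⟪x, y⟫ := by
  have inner_neg {z : E} (hz₀ : z ≠ 0) (hvz : ⟪v, z⟫ ≤ 0)
      (hz : (ℝ ∙ v)ᗮ.orthogonalProjectionOnto z = 0) : ⟪v, z⟫ < 0 := by
    refine hvz.lt_of_ne fun h ↦ hz₀ ?_
    have := inner_orthogonalProjectionOnto_orthogonal_span_singleton v z z
    rwa [hz, inner_zero_left, h, zero_mul, zero_div, sub_zero, eq_comm, inner_self_eq_zero] at this
  have hvx' := inner_neg hx₀ hvx hx
  have hv : v ≠ 0 := by rintro rfl; simp at hvx'
  have hxy := inner_orthogonalProjectionOnto_orthogonal_span_singleton v x y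
  rw [hx, inner_zero_left, eq_comm, sub_eq_zero] at hxy
  rw [hxy]
  exact div_pos (mul_pos_of_neg_of_neg hvx' (inner_neg hy₀ hvy hy)) (by positivity)

lemma finrank_orthogonal_span_singleton_add_one [FiniteDimensional ℝ E] {v : E} (hv : v ≠ 0) :
    finrank ℝ (ℝ ∙ v)ᗮ + 1 = finrank ℝ E := by
  rw [← (ℝ ∙ v).finrank_add_finrank_orthogonal, finrank_span_singleton hv, add_comm]

theorem card_le_finrank_add_one_of_pairwise_inner_neg [FiniteDimensional ℝ E] {ι : Type*}
    [Fintype ι] {p : ι → E} (hp : Pairwise fun i j ↦ ⟪p i, p j⟫ < 0) : Fintype.card ι ≤ finrank ℝ E + 1 := by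
  classical
  induction hd : finrank ℝ E generalizing E ι with
  | zero =>
    have : Subsingleton E := finrank_zero_iff.1 hd
    refine Fintype.card_le_one_iff_subsingleton.2 ⟨fun i j ↦ by_contra fun hij ↦ ?_⟩
    simpa [Subsingleton.elim (p i) 0] using hp hij
  | succ d ih =>
    rcases le_or_gt (Fintype.card ι) 1 with h | h
    · omega
    obtain ⟨i₀, j₀, hij⟩ := Fintype.exists_pair_of_one_lt_card h
    have hv : p i₀ ≠ 0 := fun h ↦ by simpa [h] using hp hij
    have hK : finrank ℝ (ℝ ∙ p i₀)ᗮ = d := by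
      have := finrank_orthogonal_span_singleton_add_one hv
      omega
    have hq := ih (ι := {i // i ≠ i₀})
      (p := fun i ↦ (ℝ ∙ p i₀)ᗮ.orthogonalProjectionOnto (p i)) (fun i j hij ↦
        (inner_orthogonalProjectionOnto_orthogonal_span_singleton_le (hp i.2.symm).le
          (hp j.2.symm).le).trans_lt (hp (Subtype.coe_ne_coe.2 hij))) hK
    rw [Fintype.card_subtype_compl, Fintype.card_subtype_eq] at hq
    omega

theorem card_le_two_mul_finrank_of_pairwise_inner_nonpos [FiniteDimensional ℝ E] {ι : Type*}
    [Fintype ι] {p : ι → E} (hp₀ : ∀ i, p i ≠ 0) (hp : Pairwise fun i j ↦ ⟪p i, p j⟫ ≤ 0) :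
    Fintype.card ι ≤ 2 * finrank ℝ E := by
  classical
  induction hd : finrank ℝ E generalizing E ι with
  | zero =>
    have : Subsingleton E := finrank_zero_iff.1 hd
    simpa using Fintype.card_eq_zero_iff.2 ⟨fun i ↦ hp₀ i (Subsingleton.elim _ _)⟩
  | succ d ih =>
    rcases isEmpty_or_nonempty ι with hι | ⟨⟨i₀⟩⟩
    · simp
    set π := (ℝ ∙ p i₀)ᗮ.orthogonalProjectionOnto
    have hK : finrank ℝ (ℝ ∙ p i₀)ᗮ = d := by
      have := finrank_orthogonal_span_singleton_add_one (hp₀ i₀)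
      omega
    have hπi₀ : π (p i₀) = 0 :=
      Submodule.orthogonalProjectionOnto_orthogonalComplement_singleton_eq_zero _
    have hne {i : ι} (hi : π (p i) ≠ 0) : i ≠ i₀ := by rintro rfl; exact hi hπi₀
    have hq := ih (ι := {i // π (p i) ≠ 0}) (p := fun i ↦ π (p i)) (fun i ↦ i.2)
      (fun i j hij ↦ (inner_orthogonalProjectionOnto_orthogonal_span_singleton_le
        (hp (hne i.2).symm) (hp (hne j.2).symm)).trans (hp (Subtype.coe_ne_coe.2 hij))) hK
    have hZ : (Finset.univ.filter fun i ↦ π (p i) = 0).card ≤ 2 := by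
      have : ((Finset.univ.filter fun i ↦ π (p i) = 0).erase i₀).card ≤ 1 := by
        refine Finset.card_le_one.2 fun a ha b hb ↦ by_contra fun hab ↦ ?_
        simp only [Finset.mem_erase, Finset.mem_filter, Finset.mem_univ, true_and] at ha hb
        exact (inner_pos_of_orthogonalProjectionOnto_orthogonal_span_singleton_eq_zero
          (hp₀ a) (hp₀ b) (hp ha.1.symm) (hp hb.1.symm) ha.2 hb.2).not_ge (hp hab)
      have := Finset.pred_card_le_card_erase
        (s := Finset.univ.filter fun i ↦ π (p i) = 0) (a := i₀)
      omega
    rw [Fintype.card_subtype_compl, Fintype.card_subtype] at hq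
    omega

lemma inner_neg_of_two_le_dist {x y : E} (hx : ‖x‖ < √2) (hy : ‖y‖ < √2) (h : 2 ≤ dist x y) :
    ⟪x, y⟫ < 0 := by
  have hx2 : ‖x‖ ^ 2 < 2 := by simpa using pow_lt_pow_left₀ hx (norm_nonneg x) two_ne_zero
  have hy2 : ‖y‖ ^ 2 < 2 := by simpa using pow_lt_pow_left₀ hy (norm_nonneg y) two_ne_zero
  rw [dist_eq_norm] at h
  nlinarith [norm_sub_sq_real x y]

lemma inner_nonpos_of_two_le_dist {x y : E} (hx : ‖x‖ ≤ √2) (hy : ‖y‖ ≤ √2) (h : 2 ≤ dist x y) :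
    ⟪x, y⟫ ≤ 0 := by
  have hx2 : ‖x‖ ^ 2 ≤ 2 := by simpa using pow_le_pow_left₀ (norm_nonneg x) hx 2
  have hy2 : ‖y‖ ^ 2 ≤ 2 := by simpa using pow_le_pow_left₀ (norm_nonneg y) hy 2
  rw [dist_eq_norm] at h
  nlinarith [norm_sub_sq_real x y]

lemma two_le_dist_of_inner_nonpos {x y : E} (hx : ‖x‖ = √2) (hy : ‖y‖ = √2) (h : ⟪x, y⟫ ≤ 0) :
    2 ≤ dist x y := by
  have := norm_sub_sq_real x y
  rw [hx, hy, Real.sq_sqrt zero_le_two, ← dist_eq_norm] at this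
  nlinarith [dist_nonneg (x := x) (y := y)]

lemma pairwise_inner_sum_elim_neg_nonpos {ι : Type*} {e : ι → E} (he : Orthonormal ℝ e) :
    Pairwise fun a b ↦ ⟪Sum.elim e (-e) a, Sum.elim e (-e) b⟫ ≤ 0 := by
  classical
  rintro (i | i) (j | j) hij <;>
    simp only [Sum.elim_inl, Sum.elim_inr, Pi.neg_apply, inner_neg_left, inner_neg_right,
      orthonormal_iff_ite.1 he] <;> split_ifs <;> simp_all

theorem exists_sqrt_two_norm_two_le_dist [FiniteDimensional ℝ E] {k : ℕ}
    (hk : k ≤ 2 * finrank ℝ E) :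
    ∃ p : Fin k → E, (∀ i, ‖p i‖ = √2) ∧ Pairwise fun i j ↦ 2 ≤ dist (p i) (p j) := by
  set b : Fin (finrank ℝ E) → E := ⇑(stdOrthonormalBasis ℝ E)
  have hb : Orthonormal ℝ b := (stdOrthonormalBasis ℝ E).orthonormal
  set u := Sum.elim b (-b)
  have hu (a) : ‖u a‖ = 1 := by cases a <;> simp [u, hb.1]
  let f : Fin k ↪ Fin (finrank ℝ E) ⊕ Fin (finrank ℝ E) :=
    (Fin.castLEEmb (two_mul (finrank ℝ E) ▸ hk)).trans finSumFinEquiv.symm.toEmbedding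
  have hnorm (i) : ‖√2 • u (f i)‖ = √2 := by simp [norm_smul, hu]
  refine ⟨fun i ↦ √2 • u (f i), hnorm, fun i j hij ↦
    two_le_dist_of_inner_nonpos (hnorm i) (hnorm j) ?_⟩
  rw [real_inner_smul_left, real_inner_smul_right]
  exact mul_nonpos_of_nonneg_of_nonpos (Real.sqrt_nonneg 2) (mul_nonpos_of_nonneg_of_nonpos
    (Real.sqrt_nonneg 2) (pairwise_inner_sum_elim_neg_nonpos hb (f.injective.ne hij)))
section Packing

variable [FiniteDimensional ℝ E] {ι : Type*} [Fintype ι] {p : ι → E}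

theorem card_le_finrank_add_one_of_norm_lt_sqrt_two (hp : ∀ i, ‖p i‖ < √2)
    (hd : Pairwise fun i j ↦ 2 ≤ dist (p i) (p j)) : Fintype.card ι ≤ finrank ℝ E + 1 :=
  card_le_finrank_add_one_of_pairwise_inner_neg fun _ _ hij ↦
    inner_neg_of_two_le_dist (hp _) (hp _) (hd hij)

theorem card_le_two_mul_finrank_of_norm_le_sqrt_two [Nontrivial ι] (hp : ∀ i, ‖p i‖ ≤ √2)
    (hd : Pairwise fun i j ↦ 2 ≤ dist (p i) (p j)) : Fintype.card ι ≤ 2 * finrank ℝ E := by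
  refine card_le_two_mul_finrank_of_pairwise_inner_nonpos (fun i h ↦ ?_) fun _ _ hij ↦
    inner_nonpos_of_two_le_dist (hp _) (hp _) (hd hij)
  obtain ⟨j, hj⟩ := exists_ne i
  have : 2 ≤ ‖p j‖ := by simpa [h] using hd hj
  linarith [hp j, Real.sqrt_two_lt_three_halves]

end Packing

theorem min_container_radius_general (n : ℕ) (k : ℕ)
    (hk1 : n + 2 ≤ k) (hk2 : k ≤ 2 * n) :
    IsLeast {r : ℝ | ∃ p : Fin k → EuclideanSpace ℝ (Fin n),
        (∀ i, ‖p i‖ ≤ r - 1) ∧ ∀ i j, i ≠ j → 2 ≤ dist (p i) (p j)}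
      (1 + Real.sqrt 2) ∧
    ¬ ∃ p : Fin (2 * n + 1) → EuclideanSpace ℝ (Fin n),
        (∀ i, ‖p i‖ ≤ Real.sqrt 2) ∧ ∀ i j, i ≠ j → 2 ≤ dist (p i) (p j) := by
  refine ⟨⟨?_, ?_⟩, ?_⟩
  · obtain ⟨p, hp, hd⟩ :=
      exists_sqrt_two_norm_two_le_dist (E := EuclideanSpace ℝ (Fin n)) (by simpa using hk2)
    exact ⟨p, fun i ↦ by simp [hp i], hd⟩
  · rintro r ⟨p, hp, hd⟩
    by_contra! hr
    have := card_le_finrank_add_one_of_norm_lt_sqrt_two (fun i ↦ (hp i).trans_lt (by linarith)) hd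
    simp only [Fintype.card_fin, finrank_euclideanSpace_fin] at this
    omega
  · rintro ⟨p, hp, hd⟩
    have : Nontrivial (Fin (2 * n + 1)) := Fin.nontrivial_iff_two_le.2 (by omega)
    have := card_le_two_mul_finrank_of_norm_le_sqrt_two hp hd
    simp only [Fintype.card_fin, finrank_euclideanSpace_fin] at this
    omega

theorem min_container_radius (n : ℕ) (hn : 2 ≤ n) (k : ℕ)
    (hk1 : n + 2 ≤ k) (hk2 : k ≤ 2 * n) :
    IsLeast {r : ℝ | ∃ p : Fin k → EuclideanSpace ℝ (Fin n),
        (∀ i, ‖p i‖ ≤ r - 1) ∧ ∀ i j, i ≠ j → 2 ≤ dist (p i) (p j)}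
      (1 + Real.sqrt 2) ∧
    ¬ ∃ p : Fin (2 * n + 1) → EuclideanSpace ℝ (Fin n),
        (∀ i, ‖p i‖ ≤ Real.sqrt 2) ∧ ∀ i j, i ≠ j → 2 ≤ dist (p i) (p j) :=
  min_container_radius_general n k hk1 hk2
end
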